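/- If A ⊆ B ⊆ ℝ where B is the closure of A, A is well-ordered, and the set of accumulation points of A is unbounded above, then A and B, viewed as well-ordered sets, have the same order type (ordinal). -/

import Mathlib

/-! Since the accumulation points of `A` are unbounded, so is `A`, and every `x` has a least
element of `A` above it. No point of `closure A` lies strictly between `x` and that element,
because the open interval between them misses `A`; hence sending `b ∈ closure A` to the least
element of `A` above `b` is strictly monotone. Together with the inclusion `A ⊆ closure A`
this gives the two inequalities between the order types. -/

/-- The ordinal (order type) of a well-ordered subset of `ℝ`. -/
noncomputable def wfOrdinal (A : Set ℝ) (h : A.IsWF) : Ordinal :=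
  letI : IsWellFounded A (· < ·) := ⟨h⟩
  Ordinal.type ((· < ·) : A → A → Prop)

open Set Filter Topology

variable {α : Type*} [LinearOrder α] [TopologicalSpace α] [OrderTopology α] {A : Set α}

theorem AccPt.inter_Ioi_nonempty_of_lt {M y : α} (hy : AccPt y (𝓟 A)) (hMy : M < y) :
    (A ∩ Ioi M).Nonempty := by
  have hyA : y ∈ closure A := mem_closure_iff_clusterPt.2 hy.clusterPt
  obtain ⟨a, haM, haA⟩ := mem_closure_iff.1 hyA (Ioi M) isOpen_Ioi hMy
  exact ⟨a, haA, haM⟩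

namespace Set.IsWF

theorem min_inter_Ioi_le_of_mem_closure (hA : A.IsWF) {x b : α} (hx : (A ∩ Ioi x).Nonempty)
    (hb : b ∈ closure A) (hxb : x < b) : (hA.mono inter_subset_left).min hx ≤ b := by
  by_contra! hbm
  obtain ⟨a, ⟨hxa, ham⟩, haA⟩ := mem_closure_iff.1 hb (Ioo x _) isOpen_Ioo ⟨hxb, hbm⟩
  exact (hA.mono inter_subset_left).not_lt_min hx ⟨haA, hxa⟩ ham

theorem exists_strictMono_closure (hA : A.IsWF) (hub : ∀ x, (A ∩ Ioi x).Nonempty) :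
    ∃ f : closure A → A, StrictMono f := by
  let m : α → α := fun x ↦ (hA.mono inter_subset_left).min (hub x)
  have hm : ∀ x, m x ∈ A ∩ Ioi x := fun x ↦ (hA.mono inter_subset_left).min_mem (hub x)
  refine ⟨fun b ↦ ⟨m b, (hm b).1⟩, fun b₁ b₂ h ↦ ?_⟩
  calc m b₁ ≤ b₂ := hA.min_inter_Ioi_le_of_mem_closure (hub b₁) b₂.2 h
    _ < m b₂ := (hm b₂).2

end Set.IsWF

/-- if `A ⊆ ℝ` is well-ordered and the set of accumulation
points of `A` is unbounded above, then `A` and its closure have the same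
order type. -/
theorem closure_same_order_type (A : Set ℝ) (hA : A.IsWF)
    (hB : (closure A).IsWF)
    (hacc : ∀ M : ℝ, ∃ y, M < y ∧ AccPt y (Filter.principal A)) :
    wfOrdinal A hA = wfOrdinal (closure A) hB := by
  let _ : IsWellFounded A (· < ·) := ⟨hA⟩
  let _ : IsWellFounded (closure A) (· < ·) := ⟨hB⟩
  have hub : ∀ M, (A ∩ Ioi M).Nonempty := fun M ↦
    let ⟨_, hMy, hy⟩ := hacc M
    hy.inter_Ioi_nonempty_of_lt hMy
  obtain ⟨f, hf⟩ := hA.exists_strictMono_closure hub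
  have hincl : StrictMono (inclusion (subset_closure (s := A))) := fun _ _ h ↦ h
  exact le_antisymm (OrderEmbedding.ofStrictMono _ hincl).ltEmbedding.ordinal_type_le
    (OrderEmbedding.ofStrictMono f hf).ltEmbedding.ordinal_type_le
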